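/- arXiv:2409.15185 — 4 statements merged into one kernel-verified Lean document; each statement's English description precedes it below -/
import Mathlib

section
/- Let K ≥ 2 be an integer. Then ∏_{p > 2K} (1 − K/p)(1 − 1/p)^(−K) ≥ e^(−K), where the product is over primes p > 2K. -/
open Real Finset

private lemma sum_shift_inv_sq_le (M : ℕ) (hM : 1 ≤ M) (n : ℕ) :
    ∑ i ∈ Finset.range n, ((((i : ℝ) + M + 1)) ^ 2)⁻¹ ≤ (M : ℝ)⁻¹ := by
  have hM' : (0:ℝ) < M := by exact_mod_cast hM
  have key : ∀ n : ℕ, ∑ i ∈ Finset.range n, ((((i : ℝ) + M + 1)) ^ 2)⁻¹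
      ≤ (M : ℝ)⁻¹ - ((M : ℝ) + n)⁻¹ := by
    intro n
    induction n with
    | zero => simp
    | succ n ih =>
      rw [Finset.sum_range_succ]
      have ha : (0:ℝ) < (M : ℝ) + n := by positivity
      have ha1 : (0:ℝ) < (M : ℝ) + n + 1 := by positivity
      have h1 : ((((n : ℝ) + M + 1)) ^ 2)⁻¹ ≤ ((M : ℝ) + n)⁻¹ - ((M : ℝ) + n + 1)⁻¹ := by
        have he : ((M : ℝ) + n)⁻¹ - ((M : ℝ) + n + 1)⁻¹
            = (((M : ℝ) + n) * ((M : ℝ) + n + 1))⁻¹ := by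
          field_simp
          ring
        rw [he]
        apply inv_anti₀ (by positivity)
        nlinarith
      have h2 : ((M : ℝ) + ↑(n + 1))⁻¹ = ((M : ℝ) + n + 1)⁻¹ := by push_cast; ring_nf
      rw [h2]
      linarith
  have ha : (0:ℝ) < (M : ℝ) + n := by positivity
  have hpos : (0:ℝ) ≤ ((M : ℝ) + n)⁻¹ := by positivity
  linarith [key n]

private lemma log_one_sub_lb {x : ℝ} (hx0 : 0 < x) (hx2 : x < 1/2) :
    -(2 * x ^ 2) ≤ Real.log (1 - x) + x := by
  have h1x : (0:ℝ) < 1 - x := by linarith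
  have hlog : Real.log ((1 - x)⁻¹) ≤ (1 - x)⁻¹ - 1 :=
    Real.log_le_sub_one_of_pos (inv_pos.mpr h1x)
  rw [Real.log_inv] at hlog
  have hv : (1 - x)⁻¹ - 1 = x / (1 - x) := by field_simp; ring
  have h : x / (1 - x) ≤ x + 2 * x ^ 2 := by
    rw [div_le_iff₀ h1x]; nlinarith
  rw [hv] at hlog
  linarith

theorem large_prime_product_bound (K : ℕ) (hK : 2 ≤ K) :
    Multipliable (fun p : {p : ℕ // p.Prime ∧ 2 * K < p} =>
      (1 - (K : ℝ) / p) * ((1 - 1 / (p : ℝ))⁻¹) ^ K) ∧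
    Real.exp (-(K : ℝ)) ≤
      ∏' p : {p : ℕ // p.Prime ∧ 2 * K < p},
        (1 - (K : ℝ) / p) * ((1 - 1 / (p : ℝ))⁻¹) ^ K := by
  set S := {p : ℕ // p.Prime ∧ 2 * K < p}
  set f : S → ℝ := fun p => (1 - (K : ℝ) / p) * ((1 - 1 / (p : ℝ))⁻¹) ^ K with hf
  set L : S → ℝ := fun p => Real.log (1 - (K : ℝ) / p) + K * Real.log ((1 - 1 / (p : ℝ))⁻¹)
    with hL
  have hKpos : (0:ℝ) < K := by positivity
  have hK' : (2:ℝ) ≤ K := by exact_mod_cast hK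
  have hp_facts : ∀ p : S, (2 * K : ℝ) < p ∧ (0:ℝ) < p := by
    intro p
    have h1 : (2 * K : ℕ) < (p : ℕ) := p.2.2
    have : (2 * K : ℝ) < (p : ℝ) := by exact_mod_cast h1
    refine ⟨this, by linarith⟩
  have hx_lt : ∀ p : S, (K : ℝ) / p < 1 / 2 := by
    intro p
    obtain ⟨h2K, hp0⟩ := hp_facts p
    rw [div_lt_div_iff₀ hp0 (by norm_num)]
    linarith
  have hx_pos : ∀ p : S, 0 < (K : ℝ) / p := fun p => div_pos hKpos (hp_facts p).2
  have h1x : ∀ p : S, (0:ℝ) < 1 - (K : ℝ) / p := by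
    intro p; have := hx_lt p; linarith
  have ht_pos : ∀ p : S, (0:ℝ) < 1 / (p : ℝ) := fun p => by
    have := (hp_facts p).2; positivity
  have ht_lt : ∀ p : S, 1 / (p : ℝ) < 1 := by
    intro p
    obtain ⟨h2K, hp0⟩ := hp_facts p
    rw [div_lt_one hp0]; linarith
  have h1t : ∀ p : S, (0:ℝ) < 1 - 1 / (p : ℝ) := by intro p; have := ht_lt p; linarith
  -- f = exp ∘ L
  have hfL : ∀ p : S, f p = Real.exp (L p) := by
    intro p
    rw [hL]
    simp only
    rw [Real.exp_add, Real.exp_nat_mul, Real.exp_log (h1x p),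
      Real.exp_log (inv_pos.mpr (h1t p))]
  -- key inequality: K * log ((1 - 1/p)⁻¹) ≥ K/p
  have hKlog : ∀ p : S, (K : ℝ) / p ≤ K * Real.log ((1 - 1 / (p : ℝ))⁻¹) := by
    intro p
    have h2 : Real.log (1 - 1 / (p : ℝ)) ≤ -(1 / (p : ℝ)) := by
      have := Real.log_le_sub_one_of_pos (h1t p)
      linarith
    have h3 : 1 / (p : ℝ) ≤ Real.log ((1 - 1 / (p : ℝ))⁻¹) := by
      rw [Real.log_inv]; linarith
    calc (K : ℝ) / p = K * (1 / (p : ℝ)) := by ring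
    _ ≤ K * Real.log ((1 - 1 / (p : ℝ))⁻¹) :=
        mul_le_mul_of_nonneg_left h3 (le_of_lt hKpos)
  -- lower bound for L
  have hLlb : ∀ p : S, -(2 * (K:ℝ) ^ 2 * (((p : ℝ)) ^ 2)⁻¹) ≤ L p := by
    intro p
    have hlb := log_one_sub_lb (hx_pos p) (hx_lt p)
    have hx2 : ((K : ℝ) / p) ^ 2 = (K:ℝ) ^ 2 * (((p : ℝ)) ^ 2)⁻¹ := by
      rw [div_pow, div_eq_mul_inv]
    rw [hL]
    simp only
    have := hKlog p
    nlinarith [hlb, hKlog p]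
  -- upper bound L ≤ 0
  have hLub : ∀ p : S, L p ≤ 0 := by
    intro p
    have hbern : (1:ℝ) - K * (1 / (p : ℝ)) ≤ (1 - 1 / (p : ℝ)) ^ K := by
      have h := one_add_mul_le_pow (a := -(1 / (p : ℝ)))
        (by nlinarith [ht_pos p, ht_lt p]) K
      simp only [mul_neg, ← sub_eq_add_neg] at h
      exact h
    have hKt : 1 - (K:ℝ)/p = 1 - (K:ℝ) * (1 / (p : ℝ)) := by ring
    have hlog : Real.log (1 - (K:ℝ)/p) ≤ K * Real.log (1 - 1 / (p : ℝ)) := by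
      rw [hKt, ← Real.log_pow]
      exact Real.log_le_log (by rw [← hKt]; exact h1x p) hbern
    have hneg : (K:ℝ) * Real.log ((1 - 1 / (p : ℝ))⁻¹)
        = -((K:ℝ) * Real.log (1 - 1 / (p : ℝ))) := by
      rw [Real.log_inv]; ring
    rw [hL]; simp only
    rw [hneg]
    linarith
  -- summability of the bound
  have hsum_nat : Summable (fun n : ℕ => (((n : ℝ)) ^ 2)⁻¹) := by
    simpa using Real.summable_one_div_nat_pow.mpr (le_refl 2)
  have hg : Summable (fun p : S => 2 * (K:ℝ) ^ 2 * (((p : ℝ)) ^ 2)⁻¹) := by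
    have h1 : Summable (fun n : ℕ => 2 * (K:ℝ) ^ 2 * (((n : ℝ)) ^ 2)⁻¹) :=
      hsum_nat.mul_left _
    exact h1.comp_injective Subtype.val_injective
  -- summability of L
  have hLsum : Summable L := by
    have h1 : Summable (fun p : S => -L p) :=
      Summable.of_nonneg_of_le (fun p => by linarith [hLub p])
        (fun p => by linarith [hLlb p]) hg
    simpa using h1.neg
  -- bound on the tsum of the comparison
  have htsum_inv_sq : ∑' p : S, (((p : ℝ)) ^ 2)⁻¹ ≤ ((2 * K : ℕ) : ℝ)⁻¹ := by
    have hbound : ∑' n : ℕ, ((((n : ℝ) + (2 * K : ℕ) + 1)) ^ 2)⁻¹ ≤ ((2 * K : ℕ) : ℝ)⁻¹ := by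
      apply Real.tsum_le_of_sum_range_le (fun n => by positivity)
      exact fun n => sum_shift_inv_sq_le (2 * K) (by omega) n
    have hsummable_shift : Summable (fun n : ℕ => ((((n : ℝ) + (2 * K : ℕ) + 1)) ^ 2)⁻¹) := by
      have h2 := (summable_nat_add_iff (2 * K + 1)).mpr hsum_nat
      apply h2.congr
      intro n; push_cast; ring_nf
    have hfS : Summable (fun p : S => (((p : ℝ)) ^ 2)⁻¹) :=
      hsum_nat.comp_injective Subtype.val_injective
    refine le_trans ?_ hbound
    apply Summable.tsum_le_tsum_of_inj (fun p : S => (p : ℕ) - (2 * K + 1))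
    · intro p q hpq
      have hp := p.2.2; have hq := q.2.2
      dsimp only at hpq
      ext
      omega
    · intro c _; positivity
    · intro p
      have hp := p.2.2
      have h : ((p : ℕ) - (2 * K + 1)) + (2 * K + 1) = (p : ℕ) := by omega
      have hcast : ((((p : ℕ) - (2 * K + 1) : ℕ)) : ℝ) + ((2 * K : ℕ) : ℝ) + 1
          = ((p : ℕ) : ℝ) := by
        conv_rhs => rw [← h]
        push_cast
        ring
      rw [hcast]
    · exact hfS
    · exact hsummable_shift
  -- total bound: -∑ L ≤ K
  have htsumL : -(K : ℝ) ≤ ∑' p : S, L p := by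
    have h1 : ∑' p : S, -L p ≤ ∑' p : S, 2 * (K:ℝ) ^ 2 * (((p : ℝ)) ^ 2)⁻¹ :=
      Summable.tsum_le_tsum (fun p => by linarith [hLlb p]) hLsum.neg hg
    have h2 : ∑' p : S, 2 * (K:ℝ) ^ 2 * (((p : ℝ)) ^ 2)⁻¹
        = 2 * (K:ℝ) ^ 2 * ∑' p : S, (((p : ℝ)) ^ 2)⁻¹ := tsum_mul_left
    have h3 : 2 * (K:ℝ) ^ 2 * ∑' p : S, (((p : ℝ)) ^ 2)⁻¹ ≤ (K : ℝ) := by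
      have h5 : 2 * (K:ℝ) ^ 2 * ∑' p : S, (((p : ℝ)) ^ 2)⁻¹
          ≤ 2 * (K:ℝ) ^ 2 * ((2 * K : ℕ) : ℝ)⁻¹ :=
        mul_le_mul_of_nonneg_left htsum_inv_sq (by positivity)
      have h6 : 2 * (K:ℝ) ^ 2 * ((2 * K : ℕ) : ℝ)⁻¹ = (K : ℝ) := by
        push_cast
        field_simp
      linarith
    have h7 : ∑' p : S, -L p = -∑' p : S, L p := tsum_neg
    rw [h7] at h1
    linarith
  -- conclude via HasProd
  have hprod : HasProd f (Real.exp (∑' p : S, L p)) := by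
    have h := hLsum.hasSum.rexp
    have hfe : f = rexp ∘ L := funext hfL
    rw [hfe]
    exact h
  refine ⟨hprod.multipliable, ?_⟩
  rw [hprod.tprod_eq]
  exact Real.exp_le_exp.mpr htsumL
end

section
/- Let K ≥ 2 be an integer, and define the singular series 𝔖 = ∏_{p ≤ K} (1 − 1/p)^(−K) · ∏_{p > K} (1 − K/p)(1 − 1/p)^(−K), products over primes. Then 𝔖 ≥ K^(−2K). -/
open Finset

-- telescoping identity
lemma tele (K M : ℕ) :
    ∏ j ∈ Finset.Icc 1 M, (1 - (K:ℝ)^2 / ((K:ℝ)+j)^2) =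
      (M.factorial * (2*K+M).factorial * (K.factorial)^2 : ℝ)
        / ((2*K).factorial * ((K+M).factorial)^2) := by
  induction M with
  | zero =>
      have h2 : ((2*K).factorial : ℝ) ≠ 0 := by positivity
      have h3 : ((K.factorial : ℝ)) ≠ 0 := by positivity
      simp
      field_simp
  | succ M ih =>
      rw [Finset.prod_Icc_succ_top (by omega), ih]
      have h1 : ((K:ℝ) + (M+1)) ≠ 0 := by positivity
      have h2 : ((2*K).factorial : ℝ) ≠ 0 := by positivity
      have h3 : (((K+M).factorial : ℝ)) ≠ 0 := by positivity
      rw [Nat.factorial_succ M, show 2*K+(M+1) = (2*K+M)+1 by ring,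
        Nat.factorial_succ (2*K+M), show K+(M+1) = (K+M)+1 by ring,
        Nat.factorial_succ (K+M)]
      push_cast
      field_simp
      ring

lemma natfac (K M : ℕ) : ((K+M).factorial)^2 ≤ M.factorial * (2*K+M).factorial := by
  have h1 := Nat.choose_mul_factorial_mul_factorial (show K ≤ 2*K+M by omega)
  have h2 := Nat.choose_mul_factorial_mul_factorial (show K ≤ K+M by omega)
  have h3 : (2*K+M) - K = K+M := by omega
  have h4 : (K+M) - K = M := by omega
  rw [h3] at h1; rw [h4] at h2
  calc ((K+M).factorial)^2 = (K+M).factorial * ((K+M).choose K * K.factorial * M.factorial) := by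
        rw [h2]; ring
    _ ≤ (K+M).factorial * ((2*K+M).choose K * K.factorial * M.factorial) := by
        have := Nat.choose_le_choose (c := K) (show K+M ≤ 2*K+M by omega)
        exact Nat.mul_le_mul_left _ (Nat.mul_le_mul_right _ (Nat.mul_le_mul_right _ this))
    _ = M.factorial * ((2*K+M).choose K * K.factorial * (K+M).factorial) := by ring
    _ = M.factorial * (2*K+M).factorial := by rw [h1]

lemma prodIcc_ge (K M : ℕ) :
    ((K.factorial : ℝ))^2 / ((2*K).factorial) ≤
      ∏ j ∈ Finset.Icc 1 M, (1 - (K:ℝ)^2 / ((K:ℝ)+j)^2) := by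
  rw [tele]
  have hle : (((K+M).factorial:ℝ))^2 ≤ (M.factorial : ℝ) * ((2*K+M).factorial) := by
    exact_mod_cast natfac K M
  have e : (M.factorial * (2*K+M).factorial * (K.factorial)^2 : ℝ)
        / ((2*K).factorial * ((K+M).factorial)^2)
      = ((K.factorial:ℝ))^2 / ((2*K).factorial)
        * ((M.factorial * (2*K+M).factorial : ℝ) / (((K+M).factorial)^2)) := by
    field_simp
  rw [e]
  have h1 : (0:ℝ) < ((K+M).factorial:ℝ)^2 := by positivity
  nlinarith [div_nonneg (by positivity : (0:ℝ) ≤ ((K.factorial:ℝ))^2) (by positivity : (0:ℝ) ≤ (((2*K).factorial:ℝ))),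
    (one_le_div h1).2 hle,
    mul_le_mul_of_nonneg_left ((one_le_div h1).2 hle)
      (div_nonneg (by positivity : (0:ℝ) ≤ ((K.factorial:ℝ))^2) (by positivity : (0:ℝ) ≤ (((2*K).factorial:ℝ))))]

-- product over any finset of naturals > K
lemma prodS_ge (K : ℕ) (S : Finset ℕ) (hS : ∀ p ∈ S, K < p) :
    ((K.factorial : ℝ))^2 / ((2*K).factorial) ≤
      ∏ p ∈ S, (1 - (K:ℝ)^2 / (p:ℝ)^2) := by
  set M := S.sup id with hM
  have hsub : S ⊆ Finset.Icc (K+1) (K+M) := by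
    intro p hp
    simp only [Finset.mem_Icc]
    have : p ≤ M := Finset.le_sup (f := id) hp
    exact ⟨hS p hp, by omega⟩
  have hF : ∀ n ∈ Finset.Icc (K+1) (K+M), 0 ≤ 1 - (K:ℝ)^2 / (n:ℝ)^2 ∧ 1 - (K:ℝ)^2 / (n:ℝ)^2 ≤ 1 := by
    intro n hn
    simp only [Finset.mem_Icc] at hn
    constructor
    · have hKn : (K:ℝ) < n := by exact_mod_cast (by omega : K < n)
      have : (K:ℝ)^2 ≤ (n:ℝ)^2 := by nlinarith [Nat.cast_nonneg (α := ℝ) K]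
      have hn2 : (0:ℝ) < (n:ℝ)^2 := by
        have : (0:ℝ) < n := by exact_mod_cast (by omega : 0 < n)
        positivity
      rw [sub_nonneg, div_le_one hn2]
      exact this
    · have : (0:ℝ) ≤ (K:ℝ)^2 / (n:ℝ)^2 := by positivity
      linarith
  calc ((K.factorial : ℝ))^2 / ((2*K).factorial)
      ≤ ∏ j ∈ Finset.Icc 1 M, (1 - (K:ℝ)^2 / ((K:ℝ)+j)^2) := prodIcc_ge K M
    _ = ∏ n ∈ Finset.Icc (K+1) (K+M), (1 - (K:ℝ)^2 / (n:ℝ)^2) := by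
        rw [← Finset.map_add_left_Icc 1 M K, Finset.prod_map]
        apply Finset.prod_congr rfl
        intro j hj
        simp only [addLeftEmbedding_apply]
        push_cast
        ring_nf
    _ ≤ ∏ p ∈ S, (1 - (K:ℝ)^2 / (p:ℝ)^2) := by
        rw [← Finset.prod_sdiff hsub]
        have h1 : ∏ n ∈ (Finset.Icc (K+1) (K+M)) \ S, (1 - (K:ℝ)^2 / (n:ℝ)^2) ≤ 1 :=
          Finset.prod_le_one (fun n hn => (hF n (Finset.mem_sdiff.1 hn).1).1)
            (fun n hn => (hF n (Finset.mem_sdiff.1 hn).1).2)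
        have h2 : (0:ℝ) ≤ ∏ p ∈ S, (1 - (K:ℝ)^2 / (p:ℝ)^2) :=
          Finset.prod_nonneg (fun p hp => (hF p (hsub hp)).1)
        nlinarith

lemma factor_ge (K p : ℕ) (hK : 2 ≤ K) (hp : K < p) :
    1 - (K:ℝ)^2 / (p:ℝ)^2 ≤ (1 - (K:ℝ)/p) * ((1 - 1/(p:ℝ))⁻¹)^K := by
  have hp3 : 3 ≤ p := by omega
  have hx : (0:ℝ) < p := by exact_mod_cast (by omega : 0 < p)
  have hKx : (K:ℝ) < p := by exact_mod_cast hp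
  have hinv : 1/(p:ℝ) ≤ 1/3 := by
    apply div_le_div_of_nonneg_left (by norm_num) (by norm_num)
    exact_mod_cast hp3
  have h1 : (0:ℝ) < 1 - 1/(p:ℝ) := by linarith
  have key : (1 + 1/(p:ℝ)) * (1 - 1/(p:ℝ)) ≤ 1 := by
    have : (0:ℝ) ≤ (1/(p:ℝ))^2 := sq_nonneg _
    nlinarith
  have h2 : 1 + 1/(p:ℝ) ≤ (1 - 1/(p:ℝ))⁻¹ := by
    rw [← one_div]
    exact (le_div_iff₀ h1).2 key
  have h3 : (1 + 1/(p:ℝ))^K ≤ ((1 - 1/(p:ℝ))⁻¹)^K :=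
    pow_le_pow_left₀ (by positivity) h2 K
  have hip : (0:ℝ) ≤ 1/(p:ℝ) := by positivity
  have h4 : 1 + (K:ℝ) * (1/(p:ℝ)) ≤ (1 + 1/(p:ℝ))^K :=
    one_add_mul_le_pow (by linarith) K
  have h5 : 1 + (K:ℝ)/p ≤ ((1 - 1/(p:ℝ))⁻¹)^K := by
    rw [div_eq_mul_one_div]
    exact le_trans h4 h3
  have h6 : (0:ℝ) ≤ 1 - (K:ℝ)/p := by
    rw [sub_nonneg, div_le_one hx]
    exact le_of_lt hKx
  calc 1 - (K:ℝ)^2 / (p:ℝ)^2 = (1 - (K:ℝ)/p) * (1 + (K:ℝ)/p) := by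
        field_simp; ring
    _ ≤ (1 - (K:ℝ)/p) * ((1 - 1/(p:ℝ))⁻¹)^K := mul_le_mul_of_nonneg_left h5 h6

theorem singular_series_lower_bound (K : ℕ) (hK : 2 ≤ K) :
    ((K : ℝ) ^ (2 * K))⁻¹ ≤
      (∏ p ∈ (Finset.range (K + 1)).filter Nat.Prime, ((1 - 1 / (p : ℝ))⁻¹) ^ K) *
        ∏' p : {p : ℕ // p.Prime ∧ K < p},
          (1 - (K : ℝ) / p) * ((1 - 1 / (p : ℝ))⁻¹) ^ K := by
  set g : {p : ℕ // p.Prime ∧ K < p} → ℝ :=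
    fun p => (1 - (K : ℝ) / p) * ((1 - 1 / (p : ℝ))⁻¹) ^ K with hg
  set B : ℝ := ((K.factorial : ℝ))^2 / ((2*K).factorial) with hB
  have hB0 : 0 < B := by positivity
  have hB1 : B ≤ 1 := by
    rw [hB, div_le_one (by positivity)]
    have h := Nat.choose_mul_factorial_mul_factorial (show K ≤ 2*K by omega)
    have h2 : 2*K - K = K := by omega
    rw [h2] at h
    have hc : 1 ≤ (2*K).choose K := Nat.choose_pos (by omega)
    have : K.factorial * K.factorial ≤ (2*K).factorial := by
      calc K.factorial * K.factorial = 1 * (K.factorial * K.factorial) := by ring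
        _ ≤ (2*K).choose K * (K.factorial * K.factorial) :=
            Nat.mul_le_mul_right _ hc
        _ = (2*K).choose K * K.factorial * K.factorial := by ring
        _ = (2*K).factorial := h
    calc ((K.factorial : ℝ))^2 = ((K.factorial * K.factorial : ℕ) : ℝ) := by push_cast; ring
      _ ≤ ((2*K).factorial : ℝ) := by exact_mod_cast this
  -- Step: first product ≥ 2^K
  have h2mem : 2 ∈ (Finset.range (K + 1)).filter Nat.Prime := by
    simp [Finset.mem_filter, Finset.mem_range, Nat.prime_two]; omega
  have hone : ∀ p ∈ (Finset.range (K + 1)).filter Nat.Prime,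
      (1:ℝ) ≤ ((1 - 1 / (p : ℝ))⁻¹) ^ K := by
    intro p hp
    have hp2 : 2 ≤ p := (Finset.mem_filter.1 hp).2.two_le
    have hx : (0:ℝ) < p := by exact_mod_cast (by omega : 0 < p)
    have hinv : 1/(p:ℝ) ≤ 1/2 := by
      apply div_le_div_of_nonneg_left (by norm_num) (by norm_num)
      exact_mod_cast hp2
    have h1 : (0:ℝ) < 1 - 1/(p:ℝ) := by linarith
    have hip : (0:ℝ) ≤ 1/(p:ℝ) := by positivity
    have hle : (1:ℝ) ≤ (1 - 1/(p:ℝ))⁻¹ := by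
      rw [← one_div, le_div_iff₀ h1]
      linarith
    calc (1:ℝ) = 1^K := (one_pow K).symm
      _ ≤ ((1 - 1/(p:ℝ))⁻¹)^K := pow_le_pow_left₀ (by norm_num) hle K
  have hP1 : (2:ℝ)^K ≤ ∏ p ∈ (Finset.range (K + 1)).filter Nat.Prime,
      ((1 - 1 / (p : ℝ))⁻¹) ^ K := by
    rw [← Finset.mul_prod_erase _ _ h2mem]
    have hrest : (1:ℝ) ≤ ∏ p ∈ ((Finset.range (K + 1)).filter Nat.Prime).erase 2,
        ((1 - 1 / (p : ℝ))⁻¹) ^ K := by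
      have := Finset.prod_le_prod (ι := ℕ) (s := ((Finset.range (K + 1)).filter Nat.Prime).erase 2)
        (f := fun _ => (1:ℝ)) (g := fun p => ((1 - 1 / (p : ℝ))⁻¹) ^ K)
        (fun _ _ => by norm_num)
        (fun p hp => hone p (Finset.mem_of_mem_erase hp))
      simpa using this
    have hval : ((1 - 1 / ((2:ℕ) : ℝ))⁻¹) ^ K = (2:ℝ)^K := by norm_num
    calc (2:ℝ)^K = ((1 - 1 / ((2:ℕ) : ℝ))⁻¹) ^ K * 1 := by rw [hval, mul_one]
      _ ≤ ((1 - 1 / ((2:ℕ) : ℝ))⁻¹) ^ K * _ :=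
          mul_le_mul_of_nonneg_left hrest (by positivity)
  have hP1nn : (0:ℝ) ≤ ∏ p ∈ (Finset.range (K + 1)).filter Nat.Prime,
      ((1 - 1 / (p : ℝ))⁻¹) ^ K :=
    le_trans (by positivity) hP1
  -- Step: tprod ≥ B
  have hT : B ≤ ∏' p, g p := by
    by_cases hm : Multipliable g
    · refine ge_of_tendsto' hm.hasProd ?_
      intro s
      calc B ≤ ∏ p ∈ s.image Subtype.val, (1 - (K:ℝ)^2 / (p:ℝ)^2) := by
            apply prodS_ge
            intro p hp
            obtain ⟨q, hq, rfl⟩ := Finset.mem_image.1 hp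
            exact q.2.2
        _ = ∏ q ∈ s, (1 - (K:ℝ)^2 / ((q:ℕ):ℝ)^2) :=
            Finset.prod_image (fun x _ y _ h => Subtype.val_injective h)
        _ ≤ ∏ q ∈ s, g q := by
            apply Finset.prod_le_prod
            · intro q _
              have hq := q.2.2
              have hKq : (K:ℝ)^2 ≤ ((q:ℕ):ℝ)^2 := by
                have : (K:ℝ) ≤ ((q:ℕ):ℝ) := by exact_mod_cast le_of_lt hq
                nlinarith [Nat.cast_nonneg (α := ℝ) K]
              have hq2 : (0:ℝ) < ((q:ℕ):ℝ)^2 := by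
                have : (0:ℝ) < ((q:ℕ):ℝ) := by exact_mod_cast (by omega : 0 < (q:ℕ))
                positivity
              rw [sub_nonneg, div_le_one hq2]
              exact hKq
            · intro q _
              exact factor_ge K q hK q.2.2
    · rw [tprod_eq_one_of_not_multipliable hm]
      exact hB1
  -- combine
  have hcomb : (2:ℝ)^K * B ≤ _ := mul_le_mul hP1 hT (le_of_lt hB0) hP1nn
  refine le_trans ?_ hcomb
  -- arithmetic: (K^(2K))⁻¹ ≤ 2^K * B
  have hCeq : B = (((2*K).choose K : ℕ) : ℝ)⁻¹ := by
    have h := Nat.choose_mul_factorial_mul_factorial (show K ≤ 2*K by omega)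
    have h2 : 2*K - K = K := by omega
    rw [h2] at h
    have hc : (0:ℝ) < (((2*K).choose K : ℕ) : ℝ) := by
      exact_mod_cast Nat.choose_pos (show K ≤ 2*K by omega)
    have hcast : (((2*K).choose K : ℕ):ℝ) * (K.factorial:ℝ)^2 = ((2*K).factorial:ℝ) := by
      have : (2*K).choose K * K.factorial ^ 2 = (2*K).factorial := by
        rw [← h]; ring
      exact_mod_cast this
    have hf : (K.factorial:ℝ) ≠ 0 := by positivity
    have hc2 : (((2*K).choose K : ℕ):ℝ) ≠ 0 := ne_of_gt hc
    rw [hB, ← hcast]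
    field_simp
  have hnat : (2*K).choose K ≤ 2^K * K^(2*K) := by
    calc (2*K).choose K ≤ (2*K)^K := Nat.choose_le_pow (2*K) K
      _ = 2^K * K^K := Nat.mul_pow 2 K K
      _ ≤ 2^K * K^(2*K) :=
          Nat.mul_le_mul_left _ (Nat.pow_le_pow_right (by omega) (by omega))
  have hreal : (((2*K).choose K : ℕ):ℝ) ≤ 2^K * (K:ℝ)^(2*K) := by exact_mod_cast hnat
  have hc : (0:ℝ) < (((2*K).choose K : ℕ):ℝ) := by
    exact_mod_cast Nat.choose_pos (show K ≤ 2*K by omega)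
  have hx : (0:ℝ) < (K:ℝ)^(2*K) := by
    have : (0:ℝ) < (K:ℝ) := by exact_mod_cast (by omega : 0 < K)
    positivity
  rw [hCeq, show (2:ℝ)^K * (((2*K).choose K : ℕ):ℝ)⁻¹ = (2:ℝ)^K / (((2*K).choose K : ℕ):ℝ)
      from (div_eq_mul_inv _ _).symm,
    inv_eq_one_div, div_le_div_iff₀ hx hc]
  linarith
end

section
/- Let x be large, K = ⌊5 log log log x⌋, X = x^(1/(log log x)³), and V = 2⌊(log log x)²⌋. Then (1/(V+1)!)·(∑_{K² < p ≤ X} K/(p−1))^(V+1) ≤ exp(−(log log x)²) for all sufficiently large x. -/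
open Finset Real Filter

lemma dyadic_block (j : ℕ) (hj : 1 ≤ j) :
    ∑ p ∈ (Finset.Ioc (2^j) (2^(j+1))).filter Nat.Prime, (1:ℝ)/((p:ℝ)-1) ≤ 4 / j := by
  set S := (Finset.Ioc (2^j) (2^(j+1))).filter Nat.Prime with hS
  have hmem : ∀ p ∈ S, 2^j < p ∧ p ≤ 2^(j+1) ∧ p.Prime := by
    intro p hp
    simp only [hS, mem_filter, mem_Ioc] at hp
    exact ⟨hp.1.1, hp.1.2, hp.2⟩
  have hprod : (2^j) ^ S.card ≤ ∏ p ∈ S, p :=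
    Finset.pow_card_le_prod S _ _ (fun p hp => (hmem p hp).1.le)
  have hprod2 : ∏ p ∈ S, p ≤ primorial (2^(j+1)) := by
    apply Finset.prod_le_prod_of_subset_of_one_le'
    · intro p hp
      simp only [mem_filter, mem_range]
      exact ⟨Nat.lt_succ_of_le (hmem p hp).2.1, (hmem p hp).2.2⟩
    · intro i hi _
      exact (Finset.mem_filter.mp hi).2.one_lt.le
  have hcard : j * S.card ≤ 2^(j+2) := by
    have h2 : (2:ℕ) ^ (j * S.card) ≤ 2 ^ (2^(j+2)) := by
      rw [pow_mul]
      calc (2^j)^S.card ≤ ∏ p ∈ S, p := hprod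
        _ ≤ primorial (2^(j+1)) := hprod2
        _ ≤ 4 ^ (2^(j+1)) := primorial_le_4_pow _
        _ = 2 ^ (2^(j+2)) := by
            rw [show (4:ℕ) = 2^2 by norm_num, ← pow_mul]
            congr 1
            rw [pow_succ]
            ring
    exact (Nat.pow_le_pow_iff_right one_lt_two).mp h2
  have h2jpos : (0:ℝ) < 2^j := by positivity
  have hterm : ∀ p ∈ S, (1:ℝ)/((p:ℝ)-1) ≤ 1/2^j := by
    intro p hp
    apply one_div_le_one_div_of_le h2jpos
    have h1 := (hmem p hp).1
    have h2 : (2:ℝ)^j + 1 ≤ (p:ℝ) := by exact_mod_cast Nat.succ_le_of_lt h1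
    linarith
  calc ∑ p ∈ S, (1:ℝ)/((p:ℝ)-1) ≤ S.card • ((1:ℝ)/2^j) :=
        Finset.sum_le_card_nsmul S _ _ hterm
    _ = (S.card : ℝ) / 2^j := by rw [nsmul_eq_mul]; ring
    _ ≤ 4 / j := by
        rw [div_le_div_iff₀ h2jpos (by exact_mod_cast Nat.cast_pos.mpr hj)]
        have hc : (j:ℝ) * S.card ≤ 2^(j+2) := by exact_mod_cast hcard
        have h22 : (2:ℝ)^(j+2) = 4 * 2^j := by rw [pow_add]; ring
        nlinarith [hc]

lemma sum_primes_le (N : ℕ) :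
    ∑ p ∈ (Finset.Ioc 2 N).filter Nat.Prime, (1:ℝ)/((p:ℝ)-1)
      ≤ 4 * (1 + Real.log (Nat.log 2 N)) := by
  set L := Nat.log 2 N with hL
  set t : ℕ → Finset ℕ := fun j => (Finset.Ioc (2^j) (2^(j+1))).filter Nat.Prime with ht
  have hsub : (Finset.Ioc 2 N).filter Nat.Prime ⊆ (Finset.Icc 1 L).biUnion t := by
    intro p hp
    simp only [mem_filter, mem_Ioc] at hp
    obtain ⟨⟨hp2, hpN⟩, hpp⟩ := hp
    have hp0 : p ≠ 0 := by omega
    set j := Nat.log 2 p with hj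
    have hj1 : 1 ≤ j := by
      apply (Nat.le_log_iff_pow_le one_lt_two hp0).mpr
      simpa using hp2.le
    have hjL : j ≤ L := Nat.log_mono_right hpN
    have hlow : 2^j ≤ p := Nat.pow_log_le_self 2 hp0
    have hlow' : 2^j < p := by
      rcases lt_or_eq_of_le hlow with h | h
      · exact h
      · exfalso
        have h2dvd : 2 ∣ p := h ▸ dvd_pow_self 2 (by omega)
        have := (Nat.prime_dvd_prime_iff_eq Nat.prime_two hpp).mp h2dvd
        omega
    have hhigh : p < 2^(j+1) := Nat.lt_pow_succ_log_self one_lt_two p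
    apply Finset.mem_biUnion.mpr
    exact ⟨j, Finset.mem_Icc.mpr ⟨hj1, hjL⟩,
      Finset.mem_filter.mpr ⟨Finset.mem_Ioc.mpr ⟨hlow', hhigh.le⟩, hpp⟩⟩
  have hdisj : Set.PairwiseDisjoint ↑(Finset.Icc 1 L) t := by
    intro i _ j _ hij
    apply Finset.disjoint_left.mpr
    intro p hpi hpj
    simp only [ht, mem_filter, mem_Ioc] at hpi hpj
    rcases lt_or_gt_of_ne hij with h | h
    · have : (2:ℕ)^(i+1) ≤ 2^j := Nat.pow_le_pow_right (by norm_num) (by omega)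
      omega
    · have : (2:ℕ)^(j+1) ≤ 2^i := Nat.pow_le_pow_right (by norm_num) (by omega)
      omega
  have hnonneg : ∀ p ∈ (Finset.Icc 1 L).biUnion t, (0:ℝ) ≤ 1/((p:ℝ)-1) := by
    intro p hp
    obtain ⟨j, hjmem, hpj⟩ := Finset.mem_biUnion.mp hp
    simp only [ht, mem_filter, mem_Ioc] at hpj
    have h1j : 1 ≤ j := (Finset.mem_Icc.mp hjmem).1
    have h2j : (2:ℕ)^1 ≤ 2^j := Nat.pow_le_pow_right (by norm_num) h1j
    rw [pow_one] at h2j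
    have hp3 : 3 ≤ p := by omega
    have hp3' : (3:ℝ) ≤ (p:ℝ) := by exact_mod_cast hp3
    have : (0:ℝ) < (p:ℝ) - 1 := by linarith
    positivity
  calc ∑ p ∈ (Finset.Ioc 2 N).filter Nat.Prime, (1:ℝ)/((p:ℝ)-1)
      ≤ ∑ p ∈ (Finset.Icc 1 L).biUnion t, (1:ℝ)/((p:ℝ)-1) :=
        Finset.sum_le_sum_of_subset_of_nonneg hsub (fun p hp _ => hnonneg p hp)
    _ = ∑ j ∈ Finset.Icc 1 L, ∑ p ∈ t j, (1:ℝ)/((p:ℝ)-1) := Finset.sum_biUnion hdisj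
    _ ≤ ∑ j ∈ Finset.Icc 1 L, 4 / (j:ℝ) := by
        apply Finset.sum_le_sum
        intro j hj
        exact dyadic_block j (Finset.mem_Icc.mp hj).1
    _ = 4 * ∑ j ∈ Finset.Icc 1 L, ((j:ℝ))⁻¹ := by
        rw [Finset.mul_sum]
        exact Finset.sum_congr rfl (fun j _ => by rw [div_eq_mul_inv])
    _ = 4 * (harmonic L : ℝ) := by
        rw [harmonic_eq_sum_Icc]
        push_cast
        ring
    _ ≤ 4 * (1 + Real.log L) := by
        have := harmonic_le_one_add_log L
        linarith

lemma factorial_bound (n : ℕ) : (n:ℝ)^n ≤ (n.factorial : ℝ) * Real.exp n := by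
  have h := Real.sum_le_exp_of_nonneg (x := (n:ℝ)) (by positivity) (n+1)
  have hsingle : (n:ℝ)^n / (n.factorial : ℝ) ≤ ∑ i ∈ Finset.range (n+1), (n:ℝ)^i / (i.factorial : ℝ) := by
    exact Finset.single_le_sum (f := fun i : ℕ => (n:ℝ)^i / (i.factorial : ℝ))
      (fun i _ => by positivity) (Finset.self_mem_range_succ n)
  have hfac : (0:ℝ) < n.factorial := by exact_mod_cast n.factorial_pos
  rw [div_le_iff₀ hfac] at hsingle
  calc (n:ℝ)^n ≤ (∑ i ∈ Finset.range (n+1), (n:ℝ)^i / (i.factorial : ℝ)) * n.factorial := hsingle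
    _ ≤ Real.exp n * n.factorial := by
        apply mul_le_mul_of_nonneg_right h hfac.le
    _ = n.factorial * Real.exp n := by ring

set_option maxHeartbeats 1000000 in
theorem sieve_error_small :
    ∃ x₀ : ℝ, ∀ x : ℝ, x₀ ≤ x →
      (1 / ((2 * ⌊(Real.log (Real.log x)) ^ 2⌋₊ + 1).factorial : ℝ)) *
        (∑ p ∈ (Finset.Ioc (⌊5 * Real.log (Real.log (Real.log x))⌋₊ ^ 2)
              ⌊x ^ (1 / (Real.log (Real.log x)) ^ 3)⌋₊).filter Nat.Prime,
            (⌊5 * Real.log (Real.log (Real.log x))⌋₊ : ℝ) / (p - 1)) ^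
          (2 * ⌊(Real.log (Real.log x)) ^ 2⌋₊ + 1)
      ≤ Real.exp (-(Real.log (Real.log x)) ^ 2) := by
  have t1 : Tendsto Real.log atTop atTop := Real.tendsto_log_atTop
  have t2 : Tendsto (fun x : ℝ => Real.log (Real.log x)) atTop atTop := t1.comp t1
  have t3 : Tendsto (fun x : ℝ => Real.log (Real.log (Real.log x))) atTop atTop := t1.comp t2
  have hev : ∀ᶠ x : ℝ in atTop,
      (1 / ((2 * ⌊(Real.log (Real.log x)) ^ 2⌋₊ + 1).factorial : ℝ)) *
        (∑ p ∈ (Finset.Ioc (⌊5 * Real.log (Real.log (Real.log x))⌋₊ ^ 2)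
              ⌊x ^ (1 / (Real.log (Real.log x)) ^ 3)⌋₊).filter Nat.Prime,
            (⌊5 * Real.log (Real.log (Real.log x))⌋₊ : ℝ) / (p - 1)) ^
          (2 * ⌊(Real.log (Real.log x)) ^ 2⌋₊ + 1)
      ≤ Real.exp (-(Real.log (Real.log x)) ^ 2) := by
    filter_upwards [eventually_ge_atTop (1:ℝ),
      t1.eventually_ge_atTop 1,
      t2.eventually_ge_atTop (57600 * Real.exp 1 ^ 2 + 9),
      t3.eventually_ge_atTop 1] with x hx1 hl1 hl2C hl3
    set l1 := Real.log x with hl1def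
    set l2 := Real.log l1 with hl2def
    set l3 := Real.log l2 with hl3def
    have hxpos : (0:ℝ) < x := by linarith
    have hepos : (0:ℝ) < Real.exp 1 := Real.exp_pos 1
    have hl2_9 : (9:ℝ) ≤ l2 := by nlinarith
    have hl2pos : (0:ℝ) < l2 := by linarith
    have hl1pos : (0:ℝ) < l1 := by linarith
    have hl3_1 : (1:ℝ) ≤ l3 := hl3
    -- abbreviations
    set K := ⌊5 * l3⌋₊ with hKdef
    set n := 2 * ⌊l2 ^ 2⌋₊ + 1 with hndef
    set X := x ^ (1 / l2 ^ 3) with hXdef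
    set Xn := ⌊X⌋₊ with hXndef
    have hK5 : 5 ≤ K := Nat.le_floor (by push_cast; nlinarith)
    have hKle : (K:ℝ) ≤ 5 * l3 := Nat.floor_le (by nlinarith)
    have hK0 : (0:ℝ) ≤ (K:ℝ) := Nat.cast_nonneg K
    -- n bounds
    have hfloor_l2 : l2 ^ 2 - 1 ≤ (⌊l2 ^ 2⌋₊ : ℝ) := by
      have := Nat.lt_floor_add_one (l2 ^ 2)
      linarith
    have hn_ge : l2 ^ 2 ≤ (n:ℝ) := by
      have : (n:ℝ) = 2 * (⌊l2 ^ 2⌋₊ : ℝ) + 1 := by push_cast [hndef]; ring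
      nlinarith
    have hnpos : (0:ℝ) < (n:ℝ) := by positivity
    have hlog2 : (0.6931471803:ℝ) < Real.log 2 := Real.log_two_gt_d9
    have hn2 : 2 * l2 ^ 2 - 1 ≤ (n:ℝ) := by
      have hcast : (n:ℝ) = 2 * (⌊l2 ^ 2⌋₊ : ℝ) + 1 := by push_cast [hndef]; ring
      nlinarith
    have hn_log2 : l2 ^ 2 ≤ (n:ℝ) * Real.log 2 := by
      have hpos21 : (0:ℝ) ≤ 2 * l2 ^ 2 - 1 := by nlinarith
      have hm : (2 * l2 ^ 2 - 1) * Real.log 2 ≤ (n:ℝ) * Real.log 2 :=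
        mul_le_mul_of_nonneg_right hn2 (by linarith)
      have hm2 : (2 * l2 ^ 2 - 1) * (0.6931471803:ℝ) ≤ (2 * l2 ^ 2 - 1) * Real.log 2 :=
        mul_le_mul_of_nonneg_left hlog2.le hpos21
      nlinarith
    -- X bounds
    have hX1 : (1:ℝ) ≤ X := by
      have h0 : x ^ (0:ℝ) ≤ x ^ (1 / l2 ^ 3) :=
        Real.rpow_le_rpow_of_exponent_le hx1 (by positivity)
      rwa [Real.rpow_zero] at h0
    have hXn1 : 1 ≤ Xn := Nat.le_floor (by exact_mod_cast hX1)
    have hXnX : (Xn:ℝ) ≤ X := Nat.floor_le (by linarith)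
    have hlogX : Real.log X = (1 / l2 ^ 3) * l1 := Real.log_rpow hxpos _
    have hlogX_le : Real.log X ≤ l1 := by
      rw [hlogX]
      rw [div_mul_eq_mul_div, one_mul]
      rw [div_le_iff₀ (by positivity)]
      have h13 : (1:ℝ) ≤ l2 ^ 3 := by nlinarith
      nlinarith [mul_le_mul_of_nonneg_left h13 hl1pos.le]
    -- Nat.log bound
    set Lg := Nat.log 2 Xn with hLgdef
    have h2Lg : (2:ℕ)^Lg ≤ Xn := Nat.pow_log_le_self 2 (by omega)
    have h2LgR : (2:ℝ)^Lg ≤ X := by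
      calc (2:ℝ)^Lg ≤ (Xn:ℝ) := by exact_mod_cast h2Lg
        _ ≤ X := hXnX
    have hLg_le : (Lg:ℝ) * Real.log 2 ≤ l1 := by
      have h := Real.log_le_log (by positivity) h2LgR
      rw [Real.log_pow] at h
      exact h.trans hlogX_le
    have hLg_le' : (Lg:ℝ) ≤ 2 * l1 := by
      have h0 : (0:ℝ) ≤ (Lg:ℝ) := Nat.cast_nonneg Lg
      nlinarith
    have hlogLg : Real.log Lg ≤ 1 + l2 := by
      have hlog2l1 : Real.log (2 * l1) = Real.log 2 + l2 := by
        rw [Real.log_mul (by norm_num) (by positivity)]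
      have hlog2le1 : Real.log 2 ≤ 1 := by
        nlinarith [Real.log_two_lt_d9]
      rcases Nat.eq_zero_or_pos Lg with h0 | hpos
      · rw [h0]
        simp only [Nat.cast_zero, Real.log_zero]
        nlinarith
      · have : Real.log Lg ≤ Real.log (2 * l1) :=
          Real.log_le_log (by exact_mod_cast hpos) hLg_le'
        rw [hlog2l1] at this
        linarith
    clear_value K n X Xn Lg
    -- the prime sum
    set F := (Finset.Ioc (K ^ 2) Xn).filter Nat.Prime with hFdef
    set T := ∑ p ∈ F, (1:ℝ)/((p:ℝ)-1) with hTdef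
    have hT0 : (0:ℝ) ≤ T := by
      apply Finset.sum_nonneg
      intro p hp
      simp only [hFdef, Finset.mem_filter, Finset.mem_Ioc] at hp
      have hp2 : 25 ≤ p := by nlinarith [hp.1.1, hK5]
      have h25 : (25:ℝ) ≤ (p:ℝ) := by exact_mod_cast hp2
      have : (0:ℝ) < (p:ℝ) - 1 := by linarith
      positivity
    have hT : T ≤ 12 * l2 := by
      have hsub : F ⊆ (Finset.Ioc 2 Xn).filter Nat.Prime := by
        apply Finset.filter_subset_filter
        apply Finset.Ioc_subset_Ioc_left
        nlinarith [hK5]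
      have hmono : T ≤ ∑ p ∈ (Finset.Ioc 2 Xn).filter Nat.Prime, (1:ℝ)/((p:ℝ)-1) := by
        apply Finset.sum_le_sum_of_subset_of_nonneg hsub
        intro p hp _
        simp only [Finset.mem_filter, Finset.mem_Ioc] at hp
        have : (2:ℝ) < (p:ℝ) := by exact_mod_cast hp.1.1
        have : (0:ℝ) < (p:ℝ) - 1 := by linarith
        positivity
      have := sum_primes_le Xn
      calc T ≤ 4 * (1 + Real.log Lg) := by
            rw [← hLgdef] at this
            rw [hTdef]; exact hmono.trans this
        _ ≤ 4 * (1 + (1 + l2)) := by nlinarith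
        _ ≤ 12 * l2 := by nlinarith
    -- total sum S = K * T
    have hsum_eq : (∑ p ∈ F, (K:ℝ)/((p:ℝ)-1)) = (K:ℝ) * T := by
      rw [hTdef, Finset.mul_sum]
      exact Finset.sum_congr rfl (fun p _ => by rw [div_eq_mul_one_div])
    set S := (K:ℝ) * T with hSdef
    have hS0 : (0:ℝ) ≤ S := mul_nonneg hK0 hT0
    have hS : S ≤ 60 * (l2 * l3) := by
      calc S ≤ (5*l3) * (12*l2) := by
            apply mul_le_mul hKle hT hT0 (by nlinarith)
        _ = 60 * (l2 * l3) := by ring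
    clear_value T
    -- sqrt bound : l3 ≤ 2 √l2
    set q := Real.sqrt l2 with hqdef
    have hq0 : (0:ℝ) ≤ q := Real.sqrt_nonneg l2
    have hqq : q * q = l2 := Real.mul_self_sqrt hl2pos.le
    have hl3q : l3 ≤ 2 * q := by
      have h1 : Real.log q = l3 / 2 := by
        rw [hl3def]; exact Real.log_sqrt hl2pos.le
      have hqpos : (0:ℝ) < q := Real.sqrt_pos.mpr hl2pos
      have h2 : Real.log q ≤ q - 1 := Real.log_le_sub_one_of_pos hqpos
      linarith
    have hqbig : 240 * Real.exp 1 ≤ q := by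
      have hsq : (240 * Real.exp 1)^2 = 57600 * Real.exp 1 ^ 2 := by ring
      have : (240 * Real.exp 1)^2 ≤ l2 := by rw [hsq]; linarith
      calc 240 * Real.exp 1 = Real.sqrt ((240 * Real.exp 1)^2) := by
            rw [Real.sqrt_sq (by positivity)]
        _ ≤ q := Real.sqrt_le_sqrt this
    clear_value q S
    clear_value l1 l2 l3
    -- key: exp 1 * S ≤ (1/2) * n
    have hkey : Real.exp 1 * S ≤ (1/2) * (n:ℝ) := by
      have ha : l2 * l3 ≤ l2 * (2 * q) := mul_le_mul_of_nonneg_left hl3q hl2pos.le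
      have h1 : Real.exp 1 * S ≤ Real.exp 1 * (120 * (l2 * q)) := by
        apply mul_le_mul_of_nonneg_left _ hepos.le
        calc S ≤ 60 * (l2 * l3) := hS
          _ ≤ 60 * (l2 * (2 * q)) := by linarith
          _ = 120 * (l2 * q) := by ring
      have h2 : 240 * Real.exp 1 * q ≤ l2 := by
        calc 240 * Real.exp 1 * q ≤ q * q := by
              have := mul_le_mul_of_nonneg_right hqbig hq0
              linarith
          _ = l2 := hqq
      have h3 : Real.exp 1 * (120 * (l2 * q)) ≤ (1/2) * l2^2 := by
        have hc : (1/2) * l2 * (240 * Real.exp 1 * q) ≤ (1/2) * l2 * l2 :=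
          mul_le_mul_of_nonneg_left h2 (by linarith)
        calc Real.exp 1 * (120 * (l2 * q)) = (1/2) * l2 * (240 * Real.exp 1 * q) := by ring
          _ ≤ (1/2) * l2 * l2 := hc
          _ = (1/2) * l2^2 := by ring
      have h4 : (1/2) * l2^2 ≤ (1/2) * (n:ℝ) := by linarith
      linarith
    have hhalf : Real.exp 1 * S / (n:ℝ) ≤ 1/2 := by
      rw [div_le_iff₀ hnpos]
      linarith
    -- final chain
    have hfacpos : (0:ℝ) < (n.factorial : ℝ) := by exact_mod_cast n.factorial_pos
    have hpowpos : (0:ℝ) < (n:ℝ)^n := by positivity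
    have hstep1 : (1 / (n.factorial : ℝ)) * S^n ≤ (Real.exp 1 * S / (n:ℝ))^n := by
      have hfb : (n:ℝ)^n ≤ (n.factorial : ℝ) * Real.exp n := factorial_bound n
      have hinv : (1:ℝ) / (n.factorial : ℝ) ≤ Real.exp n / (n:ℝ)^n := by
        rw [div_le_div_iff₀ hfacpos hpowpos]
        linarith [factorial_bound n]
      have hSn : (0:ℝ) ≤ S^n := by positivity
      calc (1 / (n.factorial : ℝ)) * S^n ≤ (Real.exp n / (n:ℝ)^n) * S^n :=
            mul_le_mul_of_nonneg_right hinv hSn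
        _ = (Real.exp 1 * S / (n:ℝ))^n := by
            rw [div_pow, mul_pow, Real.exp_one_pow]
            ring
    have hstep2 : (Real.exp 1 * S / (n:ℝ))^n ≤ (1/2:ℝ)^n := by
      apply pow_le_pow_left₀ (by positivity) hhalf
    have hstep3 : ((1:ℝ)/2)^n ≤ Real.exp (-(l2^2)) := by
      have h0 : (0:ℝ) < ((1:ℝ)/2)^n := by positivity
      have heq : ((1:ℝ)/2)^n = Real.exp (-((n:ℝ) * Real.log 2)) := by
        rw [← Real.exp_log h0, Real.log_pow]
        congr 1
        rw [one_div, Real.log_inv]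
        ring
      rw [heq]
      apply Real.exp_le_exp.mpr
      linarith
    rw [hsum_eq]
    calc (1 / (n.factorial : ℝ)) * S^n ≤ (Real.exp 1 * S / (n:ℝ))^n := hstep1
      _ ≤ ((1:ℝ)/2)^n := hstep2
      _ ≤ Real.exp (-(l2^2)) := hstep3
  obtain ⟨x₀, hx₀⟩ := eventually_atTop.mp hev
  exact ⟨x₀, hx₀⟩
end

section
/- Let t ≥ 2 be an integer, b a positive integer, and suppose for each large x there exist real numbers S₂(x), E(x) with S₂(x) ≥ b·(log log x)/(10 t^(K+1)) > 0 where K = ⌊5 log log log x⌋, S₂(x) ≤ b·L·(log log x)²/t^K with L = ⌊2 log log x⌋, |E(x)| ≤ C (log K)/t^K, and such that a + b/(t−1) + S₂(x) + E(x) ∈ ℤ for a fixed integer a. Then a contradiction follows for x sufficiently large; i.e., no such family can exist. -/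
open Filter Real

set_option maxHeartbeats 1000000 in
theorem key_lemma (t b : ℕ) (ht : 2 ≤ t) (hb : 0 < b) (C : ℝ) (hC : 0 < C) :
    ∀ᶠ u : ℝ in atTop,
      C * Real.log (⌊5 * Real.log u⌋₊ : ℝ) / (t : ℝ) ^ ⌊5 * Real.log u⌋₊
          < (b : ℝ) * u / (10 * (t : ℝ) ^ (⌊5 * Real.log u⌋₊ + 1)) ∧
      (b : ℝ) * (⌊2 * u⌋₊ : ℝ) * u ^ 2 / (t : ℝ) ^ ⌊5 * Real.log u⌋₊
          + C * Real.log (⌊5 * Real.log u⌋₊ : ℝ) / (t : ℝ) ^ ⌊5 * Real.log u⌋₊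
          < 1 / ((t : ℝ) - 1) := by
  have ht1 : (1:ℝ) ≤ (t:ℝ) := by exact_mod_cast Nat.one_le_of_lt ht
  have ht2 : (2:ℝ) ≤ (t:ℝ) := by exact_mod_cast ht
  have hb1 : (1:ℝ) ≤ (b:ℝ) := by exact_mod_cast hb
  have hε : (0:ℝ) < 5 * Real.log 2 - 3 := by
    have := Real.log_two_gt_d9; linarith
  have h1 : ∀ᶠ u : ℝ in atTop, Real.log u ≤ (b : ℝ) / (100 * t * C) * u := by
    have h := (Real.isLittleO_log_id_atTop.def
      (show (0:ℝ) < (b:ℝ) / (100 * t * C) by positivity))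
    filter_upwards [h, eventually_ge_atTop (0:ℝ)] with u hu hu0
    calc Real.log u ≤ |Real.log u| := le_abs_self _
      _ ≤ (b:ℝ) / (100 * t * C) * u := by
          simpa [Real.norm_eq_abs, abs_of_nonneg hu0] using hu
  have h2 : ∀ᶠ u : ℝ in atTop,
      2 * ((t:ℝ) - 1) * (2 * b + 5 * C) + 1 ≤ u ^ (5 * Real.log 2 - 3) :=
    (tendsto_rpow_atTop hε).eventually_ge_atTop _
  filter_upwards [h1, h2, eventually_ge_atTop (Real.exp 1)] with u hu1 hu2 hue
  have hu0 : (0:ℝ) < u := lt_of_lt_of_le (Real.exp_pos 1) hue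
  have hu1' : (1:ℝ) ≤ u := by
    have := Real.add_one_le_exp 1; linarith
  have hv1 : 1 ≤ Real.log u := by
    rw [show (1:ℝ) = Real.log (Real.exp 1) by rw [Real.log_exp]]
    exact Real.log_le_log (Real.exp_pos 1) hue
  set v := Real.log u with hv
  set K := ⌊5 * v⌋₊ with hK
  have hKle : (K:ℝ) ≤ 5 * v := Nat.floor_le (by linarith)
  have hKgt : 5 * v - 1 < (K:ℝ) := by
    have := Nat.lt_floor_add_one (5 * v); linarith
  have hlogK : Real.log (K:ℝ) ≤ 5 * v :=
    le_trans (Real.log_le_self (Nat.cast_nonneg _)) hKle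
  set T := (t:ℝ) ^ K with hT
  have hT0 : (0:ℝ) < T := by positivity
  -- lower bound on T
  have hTlow : u ^ (5 * Real.log 2 - 3) * u ^ (3:ℕ) ≤ 2 * T := by
    have h2K : (2:ℝ) ^ K ≤ T := pow_le_pow_left₀ (by norm_num) ht2 K
    have hsplit : u ^ (5 * Real.log 2 - 3) * u ^ ((3:ℕ):ℝ) = u ^ (5 * Real.log 2) := by
      rw [← Real.rpow_add hu0]; norm_num
    have hexp : u ^ (5 * Real.log 2) ≤ 2 * (2:ℝ) ^ K := by
      have e1 : u ^ (5 * Real.log 2) = Real.exp (5 * v * Real.log 2) := by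
        rw [Real.rpow_def_of_pos hu0, ← hv]; ring_nf
      have e2 : 2 * (2:ℝ) ^ K = Real.exp (((K:ℝ) + 1) * Real.log 2) := by
        rw [show 2 * (2:ℝ) ^ K = 2 ^ (K + 1) by ring,
          ← Real.rpow_natCast 2 (K + 1), Real.rpow_def_of_pos (by norm_num : (0:ℝ) < 2)]
        push_cast
        ring_nf
      rw [e1, e2]
      apply Real.exp_le_exp.mpr
      have hl2 : 0 < Real.log 2 := Real.log_pos (by norm_num)
      nlinarith [hKgt]
    calc u ^ (5 * Real.log 2 - 3) * u ^ (3:ℕ)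
        = u ^ (5 * Real.log 2 - 3) * u ^ ((3:ℕ):ℝ) := by rw [Real.rpow_natCast]
      _ = u ^ (5 * Real.log 2) := hsplit
      _ ≤ 2 * (2:ℝ) ^ K := hexp
      _ ≤ 2 * T := by linarith
  have hcl : C * Real.log (K:ℝ) ≤ C * (5 * v) :=
    mul_le_mul_of_nonneg_left hlogK hC.le
  have hA2 : 100 * (t:ℝ) * C * v ≤ (b:ℝ) * u := by
    have h100 : (0:ℝ) < 100 * t * C := by positivity
    have := mul_le_mul_of_nonneg_left hu1 h100.le
    calc 100 * (t:ℝ) * C * v ≤ 100 * (t:ℝ) * C * ((b:ℝ) / (100 * t * C) * u) := this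
      _ = (b:ℝ) * u := by field_simp
  constructor
  · rw [pow_succ, div_lt_div_iff₀ hT0 (by positivity)]
    have step1 : C * Real.log (K:ℝ) * (10 * (T * t)) ≤ 50 * t * C * v * T := by
      have := mul_le_mul_of_nonneg_right hcl (show (0:ℝ) ≤ 10 * t * T by positivity)
      linarith [this]
    have step2 : 50 * (t:ℝ) * C * v * T ≤ (b:ℝ) * u / 2 * T := by
      apply mul_le_mul_of_nonneg_right _ hT0.le
      linarith
    have step3 : (b:ℝ) * u / 2 * T < (b:ℝ) * u * T := by
      have : (0:ℝ) < (b:ℝ) * u := by positivity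
      nlinarith
    linarith
  · set L := ⌊2 * u⌋₊ with hL
    have hLle : (L:ℝ) ≤ 2 * u := Nat.floor_le (by positivity)
    have hvu : v ≤ u := Real.log_le_self hu0.le
    have hnum : (b:ℝ) * L * u ^ 2 + C * Real.log (K:ℝ) ≤ (2 * b + 5 * C) * u ^ 3 := by
      have h1' : (b:ℝ) * L * u ^ 2 ≤ 2 * b * u ^ 3 := by
        have := mul_le_mul_of_nonneg_left hLle (show (0:ℝ) ≤ (b:ℝ) * u ^ 2 by positivity)
        nlinarith [this]
      have i1 : 5 * C * v ≤ 5 * C * u := by nlinarith [hC.le]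
      have hu3' : u ≤ u ^ 3 := by
        nlinarith [mul_nonneg (mul_nonneg hu0.le (sub_nonneg.2 hu1'))
          (show (0:ℝ) ≤ u + 1 by linarith)]
      have i2 : 5 * C * u ≤ 5 * C * u ^ 3 :=
        mul_le_mul_of_nonneg_left hu3' (by positivity)
      linarith
    have hu3pos : (0:ℝ) < u ^ 3 := by positivity
    have hTbig : ((t:ℝ) - 1) * ((2 * b + 5 * C) * u ^ 3) < T := by
      have := mul_le_mul_of_nonneg_right hu2 hu3pos.le
      nlinarith [hTlow, this, hu3pos]
    rw [← add_div, div_lt_div_iff₀ hT0 (by linarith : (0:ℝ) < (t:ℝ) - 1)]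
    have := mul_le_mul_of_nonneg_right hnum (by linarith : (0:ℝ) ≤ (t:ℝ) - 1)
    nlinarith [hTbig, this]

theorem no_such_family (t b : ℕ) (ht : 2 ≤ t) (hb : 0 < b) (a : ℤ)
    (C : ℝ) (hC : 0 < C) (S₂ E : ℝ → ℝ) (x₀ : ℝ)
    (h : ∀ x : ℝ, x₀ ≤ x →
      ((b : ℝ) * Real.log (Real.log x) /
          (10 * (t : ℝ) ^ (⌊5 * Real.log (Real.log (Real.log x))⌋₊ + 1)) ≤ S₂ x) ∧
      0 < S₂ x ∧
      (S₂ x ≤ (b : ℝ) * (⌊2 * Real.log (Real.log x)⌋₊ : ℝ) *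
          (Real.log (Real.log x)) ^ 2 / (t : ℝ) ^ ⌊5 * Real.log (Real.log (Real.log x))⌋₊) ∧
      (|E x| ≤ C * Real.log (⌊5 * Real.log (Real.log (Real.log x))⌋₊ : ℝ) /
          (t : ℝ) ^ ⌊5 * Real.log (Real.log (Real.log x))⌋₊) ∧
      (∃ m : ℤ, (a : ℝ) + (b : ℝ) / ((t : ℝ) - 1) + S₂ x + E x = (m : ℝ))) :
    False := by
  have hkey := key_lemma t b ht hb C hC
  rw [eventually_atTop] at hkey
  obtain ⟨U, hU⟩ := hkey
  have htend : Tendsto (fun x => Real.log (Real.log x)) atTop atTop :=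
    Real.tendsto_log_atTop.comp Real.tendsto_log_atTop
  have hx : ∃ x : ℝ, x₀ ≤ x ∧ U ≤ Real.log (Real.log x) := by
    have h1 := htend.eventually_ge_atTop U
    have h2 := eventually_ge_atTop x₀
    obtain ⟨x, hx1, hx2⟩ := (h2.and h1).exists
    exact ⟨x, hx1, hx2⟩
  obtain ⟨x, hxx₀, hxU⟩ := hx
  obtain ⟨hlb, hpos, hub, hE, m, hm⟩ := h x hxx₀
  obtain ⟨hA, hB⟩ := hU (Real.log (Real.log x)) hxU
  set u := Real.log (Real.log x) with hu
  set K := ⌊5 * Real.log u⌋₊ with hK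
  have ht1 : (1:ℝ) < (t:ℝ) := by exact_mod_cast ht.trans_lt' (by norm_num)
  have htm1 : (0:ℝ) < (t:ℝ) - 1 := by linarith
  set δ := S₂ x + E x with hδ
  have hδpos : 0 < δ := by
    have : -(C * Real.log (K:ℝ) / (t : ℝ) ^ K) ≤ E x := by
      have := abs_le.mp hE; linarith [this.1]
    have := hlb; simp only [hδ]; linarith [hA]
  have hδlt : δ < 1 / ((t:ℝ) - 1) := by
    have : E x ≤ C * Real.log (K:ℝ) / (t : ℝ) ^ K := (abs_le.mp hE).2
    simp only [hδ]; linarith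
  -- integer trick
  set n : ℤ := (m - a) * ((t:ℤ) - 1) - b with hn
  have hnval : (n:ℝ) = ((t:ℝ) - 1) * δ := by
    have : δ = (m:ℝ) - a - (b:ℝ) / ((t:ℝ) - 1) := by
      simp only [hδ]; linarith [hm]
    rw [this]
    push_cast [hn]
    field_simp
  have hn0 : 0 < n := by
    have : (0:ℝ) < (n:ℝ) := by rw [hnval]; positivity
    exact_mod_cast this
  have hn1 : n < 1 := by
    have : (n:ℝ) < 1 := by
      rw [hnval]
      calc ((t:ℝ) - 1) * δ < ((t:ℝ) - 1) * (1 / ((t:ℝ) - 1)) :=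
        mul_lt_mul_of_pos_left hδlt htm1
        _ = 1 := by field_simp
    exact_mod_cast this
  omega
end
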